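/- arXiv:2307.01051 — 2 statements merged into one kernel-verified Lean document; each statement's English description precedes it below -/
import Mathlib

section
/- Let (X,d) be a reflexive CAT(0) space. Then for every p > 1, every measure μ ∈ W_p(X) has a unique nearest Dirac measure; that is, reach({δ_z : z ∈ X} ⊆ W_p(X)) = ∞. -/
open MeasureTheory ENNReal Set

noncomputable section

/-- The set of couplings (transference plans) between two measures. -/
def Couplings {X : Type*} [MeasurableSpace X] (μ ν : Measure X) :
    Set (Measure (X × X)) :=
  {π | π.map Prod.fst = μ ∧ π.map Prod.snd = ν}

/-- The `p`-Wasserstein (extended) distance between two measures. -/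
def Wp {X : Type*} [PseudoEMetricSpace X] [MeasurableSpace X] (p : ℝ)
    (μ ν : Measure X) : ℝ≥0∞ :=
  (⨅ π ∈ Couplings μ ν, ∫⁻ z, edist z.1 z.2 ^ p ∂π) ^ (1 / p)

/-- The `p`-Wasserstein space: probability measures with finite `p`-th moment. -/
def WSpace (X : Type*) [PseudoEMetricSpace X] [MeasurableSpace X] (p : ℝ) :
    Set (Measure X) :=
  {μ | IsProbabilityMeasure μ ∧ ∃ x₀ : X, ∫⁻ x, edist x x₀ ^ p ∂μ ≠ ⊤}

/-- The image of `X` in its Wasserstein space: the set of Dirac measures. -/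
def Diracs (X : Type*) [MeasurableSpace X] : Set (Measure X) :=
  Set.range (Measure.dirac : X → Measure X)

/-- Distance from a point to a set, with respect to a distance function `ρ`. -/
def distToSet {Y : Type*} (ρ : Y → Y → ℝ≥0∞) (y : Y) (A : Set Y) : ℝ≥0∞ :=
  ⨅ a ∈ A, ρ y a

/-- `y` has a unique metric projection onto `A`. -/
def HasUniqueProj {Y : Type*} (ρ : Y → Y → ℝ≥0∞) (A : Set Y) (y : Y) : Prop :=
  ∃! a, a ∈ A ∧ ρ y a = distToSet ρ y A

/-- The reach of `A` at `a ∈ A`, within the ambient set `S`: the supremum of radii `r`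
such that every point of the ball `B_r(a) ∩ S` has a unique metric projection onto `A`. -/
def reachAt {Y : Type*} (ρ : Y → Y → ℝ≥0∞) (S A : Set Y) (a : Y) : ℝ≥0∞ :=
  sSup {r : ℝ≥0∞ | ∀ y ∈ S, ρ a y < r → HasUniqueProj ρ A y}

/-- The global reach of `A` within the ambient set `S`. -/
def globalReach {Y : Type*} (ρ : Y → Y → ℝ≥0∞) (S A : Set Y) : ℝ≥0∞ :=
  ⨅ a ∈ A, reachAt ρ S A a

/-- A minimizing geodesic from `x` to `y`, parametrized proportionally on `[0,1]`. -/
def IsMinGeodesic {X : Type*} [PseudoMetricSpace X] (γ : ℝ → X) (x y : X) : Prop :=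
  γ 0 = x ∧ γ 1 = y ∧
    ∀ s ∈ Set.Icc (0:ℝ) 1, ∀ t ∈ Set.Icc (0:ℝ) 1, dist (γ s) (γ t) = |s - t| * dist x y

/-- A geodesic metric space: any two points are joined by a minimizing geodesic. -/
def IsGeodesicSpace (X : Type*) [PseudoMetricSpace X] : Prop :=
  ∀ x y : X, ∃ γ : ℝ → X, IsMinGeodesic γ x y

/-- `a` lies on some minimizing geodesic from `x` to `y`. -/
def OnMinGeodesic {X : Type*} [PseudoMetricSpace X] (a x y : X) : Prop :=
  ∃ γ : ℝ → X, ∃ t ∈ Set.Icc (0:ℝ) 1, IsMinGeodesic γ x y ∧ γ t = a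

/-- `m` is a midpoint of `x` and `y`. -/
def IsMidpoint {X : Type*} [PseudoMetricSpace X] (x y m : X) : Prop :=
  dist x m = dist x y / 2 ∧ dist y m = dist x y / 2

/-- `X` admits midpoints. -/
def MidpointSpace (X : Type*) [PseudoMetricSpace X] : Prop :=
  ∀ x y : X, ∃ m : X, IsMidpoint x y m

/-- `X` is `p`-convex (`p ∈ [1,∞)`). -/
def PConvex (X : Type*) [PseudoMetricSpace X] (p : ℝ) : Prop :=
  ∀ x y z m : X, IsMidpoint x y m →
    dist m z ≤ (dist x z ^ p / 2 + dist y z ^ p / 2) ^ (1 / p)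

/-- `X` is strictly `p`-convex (`p ∈ [1,∞)`): the `p`-convexity inequality is strict for
`x ≠ y` when `p > 1`, and strict whenever `d(x,y) > |d(x,z) - d(y,z)|` when `p = 1`. -/
def StrictlyPConvex (X : Type*) [PseudoMetricSpace X] (p : ℝ) : Prop :=
  PConvex X p ∧
    ∀ x y z m : X, IsMidpoint x y m →
      ((p ≠ 1 ∧ x ≠ y) ∨ (p = 1 ∧ |dist x z - dist y z| < dist x y)) →
      dist m z < (dist x z ^ p / 2 + dist y z ^ p / 2) ^ (1 / p)

/-- `X` is `∞`-convex. -/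
def InftyConvex (X : Type*) [PseudoMetricSpace X] : Prop :=
  ∀ x y z m : X, IsMidpoint x y m → dist m z ≤ max (dist x z) (dist y z)

/-- `X` is strictly `∞`-convex. -/
def StrictlyInftyConvex (X : Type*) [PseudoMetricSpace X] : Prop :=
  InftyConvex X ∧
    ∀ x y z m : X, IsMidpoint x y m → x ≠ y →
      dist m z < max (dist x z) (dist y z)

/-- `X` is uniformly `p`-convex (`p ∈ [1,∞)`). -/
def UniformlyPConvex (X : Type*) [PseudoMetricSpace X] (p : ℝ) : Prop :=
  PConvex X p ∧
    ∀ ε : ℝ, 0 < ε → ∃ ρ : ℝ, ρ ∈ Set.Ioo (0:ℝ) 1 ∧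
      ∀ x y z m : X, IsMidpoint x y m →
        ((p ≠ 1 ∧ ε * (dist x z ^ p / 2 + dist y z ^ p / 2) ^ (1 / p) < dist x y) ∨
          (p = 1 ∧
            |dist x z - dist y z| + ε * (dist x z / 2 + dist y z / 2) < dist x y)) →
        dist m z ≤ (1 - ρ) * (dist x z ^ p / 2 + dist y z ^ p / 2) ^ (1 / p)

/-- `X` is uniformly `∞`-convex. -/
def UniformlyInftyConvex (X : Type*) [PseudoMetricSpace X] : Prop :=
  InftyConvex X ∧
    ∀ ε : ℝ, 0 < ε → ∃ ρ : ℝ, ρ ∈ Set.Ioo (0:ℝ) 1 ∧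
      ∀ x y z m : X, IsMidpoint x y m →
        ε * max (dist x z) (dist y z) < dist x y →
        dist m z ≤ (1 - ρ) * max (dist x z) (dist y z)

/-- `X` is Busemann. -/
def Busemann (X : Type*) [PseudoMetricSpace X] : Prop :=
  ∀ x₀ x₁ y₀ y₁ mx my : X, IsMidpoint x₀ x₁ mx → IsMidpoint y₀ y₁ my →
    dist mx my ≤ dist x₀ y₀ / 2 + dist x₁ y₁ / 2

/-- A subset `C` of a metric space is (metrically) convex: it contains every midpoint of any
two of its points. -/
def MConvexSet {X : Type*} [PseudoMetricSpace X] (C : Set X) : Prop :=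
  ∀ x ∈ C, ∀ y ∈ C, ∀ m : X, IsMidpoint x y m → m ∈ C

/-- `X` is reflexive: every directed non-increasing family of nonempty bounded closed convex
subsets has nonempty intersection. -/
def ReflexiveSpace (X : Type*) [PseudoMetricSpace X] : Prop :=
  ∀ (I : Type) [Preorder I] [Nonempty I], IsDirected I (· ≤ ·) →
    ∀ C : I → Set X,
      (∀ i : I, (C i).Nonempty ∧ Bornology.IsBounded (C i) ∧ IsClosed (C i) ∧
        MConvexSet (C i)) →
      (∀ i j : I, i ≤ j → C j ⊆ C i) →
      (⋂ i : I, C i).Nonempty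
/-- A complete metric space is CAT(0) if for all `z, y` there is `m` such that for all `x`,
`d(x,m)² ≤ (d(x,y)² + d(x,z)²)/2 − d(y,z)²/4`. -/
def IsCAT0 (X : Type*) [MetricSpace X] : Prop :=
  ∀ z y : X, ∃ m : X, ∀ x : X,
    dist x m ^ 2 ≤ (dist x y ^ 2 + dist x z ^ 2) / 2 - dist y z ^ 2 / 4

/-!
For a probability measure `μ`, the only coupling of `μ` with `δ_z` is `μ ⊗ δ_z`, so
`F z := W_p(μ, δ_z) = (∫ d(x,z)^p dμ)^{1/p}`. By Minkowski's inequality `F` is `1`-Lipschitz and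
`d(z,w) ≤ F z + F w`, so its sublevel sets are closed and bounded. In a CAT(0) space, and more
generally in a strictly `p`-convex one with `p > 1`, `d(·,z)^p` is strictly midpoint convex, hence
so is `F^p`: the sublevel sets of `F` are convex, and two distinct minimizers would have a
midpoint doing strictly better. Reflexivity makes the nested sublevel sets above `inf F`
intersect, which yields the minimizer.
-/

section CAT0

variable {X : Type*} [MetricSpace X]

/-- CAT(0) midpoints are unique, so the defining inequality holds at every midpoint. -/
theorem IsCAT0.dist_midpoint_sq_le (hcat : IsCAT0 X) {y z m : X} (hm : IsMidpoint y z m)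
    (x : X) : dist x m ^ 2 ≤ (dist x y ^ 2 + dist x z ^ 2) / 2 - dist y z ^ 2 / 4 := by
  obtain ⟨m₀, hm₀⟩ := hcat z y
  have hmm := hm₀ m
  rw [dist_comm m y, dist_comm m z, hm.1, hm.2] at hmm
  have hm_eq : m = m₀ := dist_le_zero.mp (by nlinarith [dist_nonneg (x := m) (y := m₀)])
  exact hm_eq ▸ hm₀ x

theorem IsCAT0.midpointSpace (hcat : IsCAT0 X) : MidpointSpace X := by
  intro y z
  obtain ⟨m, hm⟩ := hcat z y
  have hy := hm y
  have hz := hm z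
  rw [dist_self] at hy
  rw [dist_self, dist_comm z y] at hz
  have hyz := dist_nonneg (x := y) (y := z)
  have hym : dist y m ≤ dist y z / 2 := by nlinarith [dist_nonneg (x := y) (y := m)]
  have hzm : dist z m ≤ dist y z / 2 := by nlinarith [dist_nonneg (x := z) (y := m)]
  have htri : dist y z ≤ dist y m + dist z m := dist_triangle_right y z m
  exact ⟨m, by linarith, by linarith⟩

theorem IsCAT0.rpow_dist_midpoint_lt (hcat : IsCAT0 X) {p : ℝ} (hp : 1 < p) {x y m : X}
    (hm : IsMidpoint x y m) (hxy : x ≠ y) (z : X) :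
    dist m z ^ p < dist x z ^ p / 2 + dist y z ^ p / 2 := by
  set a := dist x z
  set b := dist y z
  set c := dist m z
  have ha : 0 ≤ a := dist_nonneg
  have hb : 0 ≤ b := dist_nonneg
  have hc : 0 ≤ c := dist_nonneg
  have hD : 0 < dist x y := dist_pos.mpr hxy
  have habD : |a - b| ≤ dist x y := by
    simpa only [dist_comm z] using abs_dist_sub_le x y z
  -- the CAT(0) inequality reads `c² ≤ ((a+b)/2)² - (d(x,y)² - (a-b)²)/4`
  have hcat_z : c ^ 2 ≤ (a ^ 2 + b ^ 2) / 2 - dist x y ^ 2 / 4 := by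
    simpa only [dist_comm z] using hcat.dist_midpoint_sq_le hm z
  have hsq : (a - b) ^ 2 ≤ dist x y ^ 2 := by
    simpa only [sq_abs] using pow_le_pow_left₀ (abs_nonneg _) habD 2
  by_cases hab : a = b
  · have hca : c < a := by nlinarith
    calc c ^ p < a ^ p := Real.rpow_lt_rpow hc hca (by linarith)
      _ = a ^ p / 2 + b ^ p / 2 := by rw [← hab]; ring
  · have hc_mean : c ≤ (a + b) / 2 := by nlinarith
    have hconv := (strictConvexOn_rpow hp).2 (mem_Ici.mpr ha) (mem_Ici.mpr hb) hab
      (by norm_num : (0 : ℝ) < 1 / 2) (by norm_num : (0 : ℝ) < 1 / 2) (by norm_num)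
    simp only [smul_eq_mul] at hconv
    calc c ^ p ≤ ((a + b) / 2) ^ p := Real.rpow_le_rpow hc hc_mean (by linarith)
      _ = (1 / 2 * a + 1 / 2 * b) ^ p := by ring_nf
      _ < 1 / 2 * a ^ p + 1 / 2 * b ^ p := hconv
      _ = a ^ p / 2 + b ^ p / 2 := by ring

theorem IsCAT0.strictlyPConvex (hcat : IsCAT0 X) {p : ℝ} (hp : 1 < p) : StrictlyPConvex X p := by
  have hp0 : p ≠ 0 := by positivity
  have hstrict : ∀ x y z m : X, IsMidpoint x y m → x ≠ y →
      dist m z < (dist x z ^ p / 2 + dist y z ^ p / 2) ^ (1 / p) := by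
    intro x y z m hm hxy
    calc dist m z = (dist m z ^ p) ^ (1 / p) := by
          rw [one_div, Real.rpow_rpow_inv dist_nonneg hp0]
      _ < _ := Real.rpow_lt_rpow (by positivity) (hcat.rpow_dist_midpoint_lt hp hm hxy z)
          (by positivity)
  refine ⟨fun x y z m hm => ?_, fun x y z m hm hxy => hstrict x y z m hm ?_⟩
  · rcases eq_or_ne x y with rfl | hxy
    · have hmx : m = x := (dist_eq_zero.mp (by simpa using hm.1)).symm
      rw [hmx, add_halves, one_div, Real.rpow_rpow_inv dist_nonneg hp0]
    · exact (hstrict x y z m hm hxy).le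
  · rcases hxy with ⟨-, hxy⟩ | ⟨rfl, -⟩
    · exact hxy
    · exact absurd hp (lt_irrefl 1)

end CAT0

theorem StrictlyPConvex.rpow_dist_lt {X : Type*} [PseudoMetricSpace X] {p : ℝ}
    (hX : StrictlyPConvex X p) (hp : 1 < p) {x y m : X} (hm : IsMidpoint x y m) (hxy : x ≠ y)
    (z : X) : dist m z ^ p < dist x z ^ p / 2 + dist y z ^ p / 2 := by
  have hp0 : 0 < p := by linarith
  have h := Real.rpow_lt_rpow dist_nonneg (hX.2 x y z m hm (Or.inl ⟨hp.ne', hxy⟩)) hp0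
  rwa [one_div, Real.rpow_inv_rpow (by positivity) hp0.ne'] at h

theorem isClosed_setOf_le_of_le_add_edist {X : Type*} [PseudoEMetricSpace X] {f : X → ℝ≥0∞}
    (hf : ∀ z w, f z ≤ f w + edist w z) (r : ℝ≥0∞) : IsClosed {z | f z ≤ r} := by
  refine isClosed_of_closure_subset fun z hz => ?_
  rw [EMetric.mem_closure_iff] at hz
  refine ENNReal.le_of_forall_pos_le_add fun ε hε _ => ?_
  obtain ⟨w, hw, hzw⟩ := hz ε (by exact_mod_cast hε)
  calc f z ≤ f w + edist w z := hf z w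
    _ ≤ r + ε := add_le_add hw (by rw [edist_comm]; exact hzw.le)

theorem isBounded_setOf_le_of_edist_le_add {X : Type*} [PseudoMetricSpace X] {f : X → ℝ≥0∞}
    (hf : ∀ z w, edist z w ≤ f z + f w) {r : ℝ≥0∞} (hr : r ≠ ⊤) {x₀ : X} (hx₀ : f x₀ ≠ ⊤) :
    Bornology.IsBounded {z | f z ≤ r} := by
  refine (Metric.isBounded_closedBall (x := x₀) (r := (r + f x₀).toReal)).subset fun z hz => ?_
  rw [Metric.mem_closedBall, dist_edist]
  exact toReal_mono (add_ne_top.2 ⟨hr, hx₀⟩) ((hf z x₀).trans (by gcongr; exact hz))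

def MidpointStrictQuasiconvex {X β : Type*} [PseudoMetricSpace X] [LinearOrder β]
    (f : X → β) : Prop :=
  ∀ z₁ z₂ m : X, IsMidpoint z₁ z₂ m → z₁ ≠ z₂ → f m < max (f z₁) (f z₂)

namespace MidpointStrictQuasiconvex

variable {X β : Type*} [LinearOrder β] {f : X → β}

theorem mconvexSet_setOf_le [MetricSpace X] (hf : MidpointStrictQuasiconvex f) (r : β) :
    MConvexSet {z | f z ≤ r} := by
  intro z₁ h₁ z₂ h₂ m hm
  rcases eq_or_ne z₁ z₂ with rfl | hne
  · have hmz : m = z₁ := (dist_eq_zero.mp (by simpa using hm.1)).symm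
    rwa [hmz]
  · exact (hf z₁ z₂ m hm hne).le.trans (max_le h₁ h₂)

theorem eq_of_forall_le [PseudoMetricSpace X] (hf : MidpointStrictQuasiconvex f)
    (hmid : MidpointSpace X) {z₁ z₂ : X} (h₁ : ∀ w, f z₁ ≤ f w) (h₂ : ∀ w, f z₂ ≤ f w) :
    z₁ = z₂ := by
  by_contra hne
  obtain ⟨m, hm⟩ := hmid z₁ z₂
  exact (hf z₁ z₂ m hm hne).not_ge (max_le (h₁ m) (h₂ m))

end MidpointStrictQuasiconvex

theorem ReflexiveSpace.exists_forall_le {X : Type*} [PseudoMetricSpace X]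
    (hrefl : ReflexiveSpace X) {f : X → ℝ≥0∞} (hclosed : ∀ r, IsClosed {z | f z ≤ r})
    (hbdd : ∀ r ≠ ⊤, Bornology.IsBounded {z | f z ≤ r})
    (hconv : ∀ r, MConvexSet {z | f z ≤ r}) (hfin : ∃ z, f z ≠ ⊤) :
    ∃ z, ∀ w, f z ≤ f w := by
  set d := ⨅ w, f w
  have hd : d < ⊤ := let ⟨z, hz⟩ := hfin; (iInf_le f z).trans_lt hz.lt_top
  have : Nonempty (Ioo d ⊤)ᵒᵈ := let ⟨r, hr⟩ := exists_between hd; ⟨OrderDual.toDual ⟨r, hr⟩⟩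
  obtain ⟨z, hz⟩ := hrefl (Ioo d ⊤)ᵒᵈ inferInstance (fun i => {z | f z ≤ (OrderDual.ofDual i).1})
    (fun i => ⟨(iInf_lt_iff.1 (OrderDual.ofDual i).2.1).imp fun _ => le_of_lt,
      hbdd _ (OrderDual.ofDual i).2.2.ne, hclosed _, hconv _⟩)
    (fun i j hij z (hz : f z ≤ _) => hz.trans (OrderDual.toDual_le_toDual.mp hij))
  refine ⟨z, fun w => le_trans ?_ (iInf_le f w)⟩
  by_contra! hdz
  obtain ⟨r, hdr, hrz⟩ := exists_between hdz
  exact (mem_iInter.1 hz (OrderDual.toDual ⟨r, hdr, hrz.trans_le le_top⟩)).not_gt hrz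

theorem lintegral_Lp_le_add_of_le {α : Type*} [MeasurableSpace α] {ν : Measure α} {p : ℝ}
    (hp : 1 ≤ p) {f g h : α → ℝ≥0∞} (hg : AEMeasurable g ν) (hh : AEMeasurable h ν)
    (hfgh : ∀ a, f a ≤ g a + h a) :
    (∫⁻ a, f a ^ p ∂ν) ^ (1 / p) ≤ (∫⁻ a, g a ^ p ∂ν) ^ (1 / p) + (∫⁻ a, h a ^ p ∂ν) ^ (1 / p) :=
  (rpow_le_rpow (lintegral_mono fun a => rpow_le_rpow (hfgh a) (by linarith)) (by positivity)).trans
    (ENNReal.lintegral_Lp_add_le hg hh hp)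

theorem prod_dirac_mem_couplings {X : Type*} [MeasurableSpace X] (μ : Measure X)
    [IsProbabilityMeasure μ] (z : X) :
    μ.prod (Measure.dirac z) ∈ Couplings μ (Measure.dirac z) := by
  simp [Couplings, Measure.map_fst_prod, Measure.map_snd_prod]

section Wasserstein

variable {X : Type*} [PseudoEMetricSpace X] [MeasurableSpace X] [OpensMeasurableSpace X]
  {p : ℝ} {μ : Measure X}

theorem lintegral_edist_rpow_of_mem_couplings_dirac [MeasurableSingletonClass X] {z : X}
    {π : Measure (X × X)} (hπ : π ∈ Couplings μ (Measure.dirac z)) :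
    ∫⁻ ω, edist ω.1 ω.2 ^ p ∂π = ∫⁻ x, edist x z ^ p ∂μ := by
  obtain ⟨hfst, hsnd⟩ := hπ
  have hsnd_ae : ∀ᵐ ω ∂π, ω.2 = z := by
    have h : ∀ᵐ y ∂π.map Prod.snd, y = z := by
      rw [hsnd]
      exact (ae_dirac_iff (measurableSet_singleton z)).2 rfl
    exact (ae_map_iff measurable_snd.aemeasurable (measurableSet_singleton z)).1 h
  calc ∫⁻ ω, edist ω.1 ω.2 ^ p ∂π = ∫⁻ ω, edist ω.1 z ^ p ∂π :=
        lintegral_congr_ae (hsnd_ae.mono fun ω h => by simp only [h])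
    _ = ∫⁻ x, edist x z ^ p ∂π.map Prod.fst :=
        (lintegral_map (measurable_edist_left.pow_const p) measurable_fst).symm
    _ = ∫⁻ x, edist x z ^ p ∂μ := by rw [hfst]

variable [IsProbabilityMeasure μ]

theorem Wp_dirac [MeasurableSingletonClass X] (z : X) :
    Wp p μ (Measure.dirac z) = (∫⁻ x, edist x z ^ p ∂μ) ^ (1 / p) := by
  refine congrArg (· ^ (1 / p)) (le_antisymm ?_ ?_)
  · exact (iInf₂_le _ (prod_dirac_mem_couplings μ z)).trans_eq
      (lintegral_edist_rpow_of_mem_couplings_dirac (prod_dirac_mem_couplings μ z))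
  · exact le_iInf₂ fun π hπ => (lintegral_edist_rpow_of_mem_couplings_dirac hπ).ge

variable [MeasurableSingletonClass X]

theorem Wp_dirac_le_add_edist (hp : 1 ≤ p) (z w : X) :
    Wp p μ (Measure.dirac z) ≤ Wp p μ (Measure.dirac w) + edist w z := by
  have hconst : (∫⁻ _ : X, edist w z ^ p ∂μ) ^ (1 / p) = edist w z := by
    rw [lintegral_const, measure_univ, mul_one, one_div, rpow_rpow_inv (by positivity)]
  rw [Wp_dirac, Wp_dirac, ← hconst]
  exact lintegral_Lp_le_add_of_le hp measurable_edist_left.aemeasurable aemeasurable_const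
    fun x => edist_triangle x w z

theorem edist_le_Wp_dirac_add (hp : 1 ≤ p) (z w : X) :
    edist z w ≤ Wp p μ (Measure.dirac z) + Wp p μ (Measure.dirac w) := by
  have hconst : (∫⁻ _ : X, edist z w ^ p ∂μ) ^ (1 / p) = edist z w := by
    rw [lintegral_const, measure_univ, mul_one, one_div, rpow_rpow_inv (by positivity)]
  rw [Wp_dirac, Wp_dirac, ← hconst]
  exact lintegral_Lp_le_add_of_le hp measurable_edist_left.aemeasurable
    measurable_edist_left.aemeasurable fun x => edist_triangle_left z w x

end Wasserstein

theorem StrictlyPConvex.Wp_dirac_midpoint_lt_max {X : Type*} [PseudoMetricSpace X]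
    [MeasurableSpace X] [OpensMeasurableSpace X] [MeasurableSingletonClass X] {p : ℝ}
    (hX : StrictlyPConvex X p) (hp : 1 < p) {μ : Measure X} [IsProbabilityMeasure μ]
    {z₁ z₂ m : X} (hm : IsMidpoint z₁ z₂ m) (hne : z₁ ≠ z₂)
    (hfin : Wp p μ (Measure.dirac m) ≠ ⊤) :
    Wp p μ (Measure.dirac m) < max (Wp p μ (Measure.dirac z₁)) (Wp p μ (Measure.dirac z₂)) := by
  have hp0 : 0 < p := by linarith
  set G : X → ℝ≥0∞ := fun z => ∫⁻ x, edist x z ^ p ∂μ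
  simp only [Wp_dirac] at hfin ⊢
  have hGm : G m ≠ ⊤ := by
    simpa [one_div, rpow_inv_rpow hp0.ne'] using rpow_ne_top_of_nonneg hp0.le hfin
  have hpointwise : ∀ x, edist x m ^ p < edist x z₁ ^ p / 2 + edist x z₂ ^ p / 2 := by
    intro x
    have h := hX.rpow_dist_lt hp hm hne x
    rw [← ofReal_lt_ofReal_iff_of_nonneg (by positivity), ofReal_add (by positivity)
      (by positivity), ofReal_div_of_pos two_pos, ofReal_div_of_pos two_pos] at h
    simpa only [edist_comm x, edist_dist, ofReal_rpow_of_nonneg dist_nonneg hp0.le,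
      ofReal_ofNat] using h
  have hGlt : G m < G z₁ / 2 + G z₂ / 2 := by
    calc G m < ∫⁻ x, (edist x z₁ ^ p / 2 + edist x z₂ ^ p / 2) ∂μ :=
          lintegral_strict_mono (IsProbabilityMeasure.ne_zero μ) (by fun_prop) hGm
            (ae_of_all μ hpointwise)
      _ = G z₁ / 2 + G z₂ / 2 := by
          simp only [div_eq_mul_inv]
          rw [lintegral_add_left (by fun_prop), lintegral_mul_const' _ _ (by simp),
            lintegral_mul_const' _ _ (by simp)]
  have hGmax : G m < max (G z₁) (G z₂) :=
    calc G m < G z₁ / 2 + G z₂ / 2 := hGlt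
      _ ≤ max (G z₁) (G z₂) / 2 + max (G z₁) (G z₂) / 2 := by gcongr <;> simp
      _ = max (G z₁) (G z₂) := ENNReal.add_halves _
  rw [← (monotone_rpow_of_nonneg (by positivity)).map_max]
  exact rpow_lt_rpow hGmax (by positivity)

theorem hasUniqueProj_range {ι Y : Type*} {ρ : Y → Y → ℝ≥0∞} {f : ι → Y} {y : Y} {i : ι}
    (hi : ∀ j, ρ y (f i) ≤ ρ y (f j)) (huniq : ∀ j, ρ y (f j) ≤ ρ y (f i) → j = i) :
    HasUniqueProj ρ (range f) y := by
  have hdist : distToSet ρ y (range f) = ρ y (f i) := by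
    rw [distToSet, iInf_range]
    exact le_antisymm (iInf_le _ i) (le_iInf hi)
  refine ⟨f i, ⟨mem_range_self i, hdist.symm⟩, ?_⟩
  rintro _ ⟨⟨j, rfl⟩, hj⟩
  rw [huniq j (hj.trans hdist).le]

theorem globalReach_eq_top {Y : Type*} {ρ : Y → Y → ℝ≥0∞} {S A : Set Y}
    (h : ∀ y ∈ S, HasUniqueProj ρ A y) : globalReach ρ S A = ⊤ :=
  iInf₂_eq_top.2 fun _ _ => top_unique (le_sSup fun y hy _ => h y hy)

theorem ReflexiveSpace.hasUniqueProj_diracs {X : Type*} [MetricSpace X] [MeasurableSpace X]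
    [OpensMeasurableSpace X] (hrefl : ReflexiveSpace X) (hmid : MidpointSpace X) {p : ℝ}
    (hX : StrictlyPConvex X p) (hp : 1 < p) {μ : Measure X} (hμ : μ ∈ WSpace X p) :
    HasUniqueProj (Wp p) (Diracs X) μ := by
  obtain ⟨hprob, x₀, hx₀⟩ := hμ
  set F : X → ℝ≥0∞ := fun z => Wp p μ (Measure.dirac z)
  have hFx₀ : F x₀ ≠ ⊤ := by
    simpa only [F, Wp_dirac] using rpow_ne_top_of_nonneg (by positivity) hx₀
  have hF_le : ∀ z w, F z ≤ F w + edist w z := Wp_dirac_le_add_edist hp.le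
  have hF_ne_top : ∀ z, F z ≠ ⊤ := fun z =>
    ne_top_of_le_ne_top (add_ne_top.2 ⟨hFx₀, edist_ne_top _ _⟩) (hF_le z x₀)
  have hF_conv : MidpointStrictQuasiconvex F := fun z₁ z₂ m hm hne =>
    hX.Wp_dirac_midpoint_lt_max hp hm hne (hF_ne_top m)
  obtain ⟨z, hz⟩ := hrefl.exists_forall_le (isClosed_setOf_le_of_le_add_edist hF_le)
    (fun r hr => isBounded_setOf_le_of_edist_le_add (edist_le_Wp_dirac_add hp.le) hr hFx₀)
    hF_conv.mconvexSet_setOf_le ⟨x₀, hFx₀⟩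
  exact hasUniqueProj_range hz fun w hw =>
    hF_conv.eq_of_forall_le hmid (fun v => hw.trans (hz v)) hz

theorem reach_infinite_of_CAT0_general {X : Type*} [MetricSpace X]
    [MeasurableSpace X] [BorelSpace X] (hcat : IsCAT0 X) (hrefl : ReflexiveSpace X) :
    ∀ p : ℝ, 1 < p →
      (∀ μ ∈ WSpace X p, HasUniqueProj (Wp p) (Diracs X) μ) ∧
      globalReach (Wp p) (WSpace X p) (Diracs X) = ⊤ := by
  intro p hp
  have hproj : ∀ μ ∈ WSpace X p, HasUniqueProj (Wp p) (Diracs X) μ := fun _ hμ =>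
    hrefl.hasUniqueProj_diracs hcat.midpointSpace (hcat.strictlyPConvex hp) hp hμ
  exact ⟨hproj, globalReach_eq_top hproj⟩

/-- If `X` is a reflexive CAT(0) space, then for every `p > 1` each measure
in `W_p(X)` has a unique nearest Dirac measure; i.e. the reach of the Dirac embedding
`X ↪ W_p(X)` is infinite. -/
theorem reach_infinite_of_CAT0 {X : Type*} [MetricSpace X] [CompleteSpace X]
    [MeasurableSpace X] [BorelSpace X] (hcat : IsCAT0 X) (hrefl : ReflexiveSpace X) :
    ∀ p : ℝ, 1 < p →
      (∀ μ ∈ WSpace X p, HasUniqueProj (Wp p) (Diracs X) μ) ∧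
      globalReach (Wp p) (WSpace X p) (Diracs X) = ⊤ :=
  reach_infinite_of_CAT0_general hcat hrefl
end
end

section
/- Let (X,d) be a geodesic metric space, θ = φ (i.e. ψ ≡ Id) with φ : ℝ⁺ → ℝ⁺ convex, strictly increasing, continuous, φ(1) = 1, so that x ↦ δ_x isometrically embeds X into the Orlicz–Wasserstein space W_θ(X). Let x ≠ y in X, 0 < λ < 1, and μ = λδ_x + (1−λ)δ_y. Then any point a ∈ X minimizing z ↦ W_θ(δ_z, μ) lies on a minimizing geodesic from x to y: for every a not on any minimizing geodesic from x to y there exists a' on a minimizing geodesic from x to y with W_θ(δ_{a'}, μ) < W_θ(δ_a, μ). -/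
/-! For a Dirac mass every coupling integrates like the product coupling, so `W_φ(δ_a, μ)` is the
gauge `inf {t > 0 : λ φ(d(a,x)/t) + (1-λ) φ(d(a,y)/t) ≤ 1}`, which is strictly monotone in
`d(a,y)` and monotone in `d(a,x)`: at the gauge the constraint is active by continuity, and a
strict drop of the cost there lets the gauge decrease. If `a` lies on no minimizing geodesic, the
triangle inequality `d(x,y) ≤ d(x,a) + d(a,y)` is strict (an equality would let the geodesics
`x → a` and `a → y` be concatenated), so the point of a geodesic from `x` to `y` at distance
`min (d(x,a), d(x,y))` from `x` is no farther from `x` than `a` and strictly closer to `y`. -/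

open MeasureTheory ENNReal Set

noncomputable section

/-- The standing assumptions on the cost function `φ` in the Orlicz–Wasserstein construction
(with `ψ ≡ Id`): `φ : ℝ⁺ → ℝ⁺` is convex, strictly increasing, continuous and `φ(1) = 1`
(so that `x ↦ δ_x` is an isometric embedding of `X` into `W_φ(X)`). -/
structure IsOrliczCost (φ : ℝ → ℝ) : Prop where
  convexOn : ConvexOn ℝ (Set.Ici 0) φ
  strictMonoOn : StrictMonoOn φ (Set.Ici 0)
  continuousOn : ContinuousOn φ (Set.Ici 0)
  nonneg : ∀ t ∈ Set.Ici (0:ℝ), 0 ≤ φ t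
  map_one : φ 1 = 1

/-- The Orlicz–Wasserstein distance associated to `φ` (with `ψ ≡ Id`):
`W_φ(μ,ν) = inf { t > 0 : inf_π ∫ φ(d(x,y)/t) dπ ≤ 1 }`. -/
def WOrlicz {X : Type*} [MetricSpace X] [MeasurableSpace X] (φ : ℝ → ℝ)
    (μ ν : Measure X) : ℝ :=
  sInf {t : ℝ | 0 < t ∧
    sInf ((fun π : Measure (X × X) => ∫ z, φ (dist z.1 z.2 / t) ∂π) '' Couplings μ ν) ≤ 1}

/-- The Orlicz–Wasserstein space: probability measures `μ` with
`∫ φ(d(x,x₀)/t) dμ < ∞` for some `t > 0`. -/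
def OrliczSpace (X : Type*) [MetricSpace X] [MeasurableSpace X] (φ : ℝ → ℝ) :
    Set (Measure X) :=
  {μ | IsProbabilityMeasure μ ∧ ∃ x₀ : X, ∃ t : ℝ, 0 < t ∧
    ∫⁻ x, ENNReal.ofReal (φ (dist x x₀ / t)) ∂μ ≠ ⊤}

open Filter Topology

def luxemburgGauge (F : ℝ → ℝ) : ℝ :=
  sInf {t : ℝ | 0 < t ∧ F t ≤ 1}

section LuxemburgGauge

variable {F G : ℝ → ℝ}

lemma luxemburgGauge_pos (hne : {t : ℝ | 0 < t ∧ F t ≤ 1}.Nonempty)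
    (hF : ∀ᶠ t in 𝓝[>] 0, 1 < F t) : 0 < luxemburgGauge F := by
  obtain ⟨ε, hε, hsub⟩ := mem_nhdsGT_iff_exists_Ioo_subset.1 hF
  refine hε.trans_le (le_csInf hne fun t ⟨ht, hFt⟩ => ?_)
  by_contra! htε
  exact (hsub ⟨ht, htε⟩ : 1 < F t).not_ge hFt

lemma apply_luxemburgGauge_le_one (hne : {t : ℝ | 0 < t ∧ F t ≤ 1}.Nonempty)
    (hF : ContinuousAt F (luxemburgGauge F)) : F (luxemburgGauge F) ≤ 1 :=
  ContinuousWithinAt.closure_le (csInf_mem_closure hne ⟨0, fun _ ht => ht.1.le⟩)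
    hF.continuousWithinAt continuousWithinAt_const fun _ ht => ht.2

lemma luxemburgGauge_lt {w : ℝ} (hw : 0 < w) (hG : ContinuousAt G w) (hGw : G w < 1) :
    luxemburgGauge G < w := by
  obtain ⟨t, htw, ht, hGt⟩ :=
    (Filter.Eventually.and (Ioi_mem_nhds hw) (hG.eventually (gt_mem_nhds hGw))).exists_lt
  exact (csInf_le (⟨0, fun _ hs => hs.1.le⟩ : BddBelow {t : ℝ | 0 < t ∧ G t ≤ 1})
    ⟨ht, hGt.le⟩).trans_lt htw

end LuxemburgGauge

namespace IsOrliczCost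

variable {φ : ℝ → ℝ}

lemma apply_le_one (hφ : IsOrliczCost φ) {s : ℝ} (hs0 : 0 ≤ s) (hs1 : s ≤ 1) : φ s ≤ 1 :=
  hφ.map_one ▸ hφ.strictMonoOn.monotoneOn hs0 (mem_Ici.2 zero_le_one) hs1

lemma tendsto_atTop (hφ : IsOrliczCost φ) : Tendsto φ atTop atTop := by
  have hk : 0 < 1 - φ 0 := hφ.map_one ▸ sub_pos.2 (hφ.strictMonoOn (mem_Ici.2 le_rfl)
    (mem_Ici.2 zero_le_one) zero_lt_one)
  have hline : Tendsto (fun s => 1 + (1 - φ 0) * (s - 1)) atTop atTop :=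
    tendsto_atTop_add_const_left _ 1
      ((tendsto_atTop_add_const_right _ (-1) tendsto_id).const_mul_atTop hk)
  refine tendsto_atTop_mono' _ ?_ hline
  filter_upwards [eventually_gt_atTop 1] with s hs
  have hslope := hφ.convexOn.slope_mono_adjacent (mem_Ici.2 le_rfl)
    (mem_Ici.2 (zero_le_one.trans hs.le)) zero_lt_one hs
  rw [hφ.map_one, sub_zero, div_one, le_div_iff₀ (sub_pos.2 hs)] at hslope
  linarith

lemma tendsto_comp_div_nhdsGT_zero (hφ : IsOrliczCost φ) {d : ℝ} (hd : 0 < d) :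
    Tendsto (fun t => φ (d / t)) (𝓝[>] 0) atTop :=
  hφ.tendsto_atTop.comp (tendsto_inv_nhdsGT_zero.const_mul_atTop hd)

lemma continuousAt_comp_div (hφ : IsOrliczCost φ) {d t : ℝ} (hd : 0 ≤ d) (ht : 0 < t) :
    ContinuousAt (fun s => φ (d / s)) t :=
  (hφ.continuousOn.comp (continuousOn_const.div continuousOn_id fun _ hs => ne_of_gt hs)
    fun _ hs => div_nonneg hd (le_of_lt hs)).continuousAt (Ioi_mem_nhds ht)

lemma luxemburgGauge_two_point_lt (hφ : IsOrliczCost φ) {l : ℝ} (hl0 : 0 ≤ l) (hl1 : l < 1)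
    {d₁ d₂ e₁ e₂ : ℝ} (he₁ : 0 ≤ e₁) (h₁ : e₁ ≤ d₁) (he₂ : 0 ≤ e₂) (h₂ : e₂ < d₂) :
    luxemburgGauge (fun t => l * φ (e₁ / t) + (1 - l) * φ (e₂ / t)) <
      luxemburgGauge (fun t => l * φ (d₁ / t) + (1 - l) * φ (d₂ / t)) := by
  set F := fun t => l * φ (d₁ / t) + (1 - l) * φ (d₂ / t)
  have hd₁ : 0 ≤ d₁ := he₁.trans h₁
  have hd₂ : 0 < d₂ := he₂.trans_lt h₂
  have hl : 0 < 1 - l := sub_pos.2 hl1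
  have hne : {t : ℝ | 0 < t ∧ F t ≤ 1}.Nonempty := by
    have ht : 0 < max d₁ d₂ := lt_max_of_lt_right hd₂
    refine ⟨max d₁ d₂, ht, ?_⟩
    have h₁ := hφ.apply_le_one (div_nonneg hd₁ ht.le) ((div_le_one ht).2 (le_max_left d₁ d₂))
    have h₂ := hφ.apply_le_one (div_nonneg hd₂.le ht.le) ((div_le_one ht).2 (le_max_right d₁ d₂))
    simp only [F]
    nlinarith
  -- the `y`-term alone already forces `F t > 1` for small `t`
  have hblow : ∀ᶠ t in 𝓝[>] 0, 1 < F t := by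
    filter_upwards [(hφ.tendsto_comp_div_nhdsGT_zero hd₂).eventually_gt_atTop (1 / (1 - l)),
      self_mem_nhdsWithin] with t ht ht0
    rw [div_lt_iff₀' hl] at ht
    nlinarith [hφ.nonneg _ (mem_Ici.2 (div_nonneg hd₁ ht0.le))]
  have hw := luxemburgGauge_pos hne hblow
  set w := luxemburgGauge F
  have hcont {a b : ℝ} (ha : 0 ≤ a) (hb : 0 ≤ b) :
      ContinuousAt (fun t => l * φ (a / t) + (1 - l) * φ (b / t)) w :=
    (continuousAt_const.mul (hφ.continuousAt_comp_div ha hw)).add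
      (continuousAt_const.mul (hφ.continuousAt_comp_div hb hw))
  refine luxemburgGauge_lt hw (hcont he₁ he₂) ?_
  have hle : φ (e₁ / w) ≤ φ (d₁ / w) := hφ.strictMonoOn.monotoneOn
    (mem_Ici.2 (div_nonneg he₁ hw.le)) (mem_Ici.2 (div_nonneg hd₁ hw.le)) (by gcongr)
  have hlt : φ (e₂ / w) < φ (d₂ / w) := hφ.strictMonoOn
    (mem_Ici.2 (div_nonneg he₂ hw.le)) (mem_Ici.2 (div_nonneg hd₂.le hw.le)) (by gcongr)
  calc l * φ (e₁ / w) + (1 - l) * φ (e₂ / w) < F w :=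
        add_lt_add_of_le_of_lt (mul_le_mul_of_nonneg_left hle hl0) (mul_lt_mul_of_pos_left hlt hl)
    _ ≤ 1 := apply_luxemburgGauge_le_one hne (hcont hd₁ hd₂.le)

end IsOrliczCost

section Geodesic

variable {X : Type*} [PseudoMetricSpace X] {γ : ℝ → X} {x y : X}

lemma IsMinGeodesic.dist_left (hγ : IsMinGeodesic γ x y) {t : ℝ} (ht : t ∈ Icc (0 : ℝ) 1) :
    dist x (γ t) = t * dist x y := by
  rw [← hγ.1, hγ.2.2 0 (left_mem_Icc.2 zero_le_one) t ht, zero_sub, abs_neg, abs_of_nonneg ht.1,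
    hγ.1]

lemma IsMinGeodesic.dist_right (hγ : IsMinGeodesic γ x y) {t : ℝ} (ht : t ∈ Icc (0 : ℝ) 1) :
    dist (γ t) y = (1 - t) * dist x y := by
  rw [← hγ.2.1, hγ.2.2 t ht 1 (right_mem_Icc.2 zero_le_one), abs_sub_comm,
    abs_of_nonneg (sub_nonneg.2 ht.2), hγ.2.1]

lemma IsMinGeodesic.dist_div (hγ : IsMinGeodesic γ x y) {c u v : ℝ} (hc : 0 < c)
    (hu : u ∈ Icc 0 c) (hv : v ∈ Icc 0 c) :
    dist (γ (u / c)) (γ (v / c)) = |u - v| * (dist x y / c) := by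
  have hmem {w : ℝ} (hw : w ∈ Icc 0 c) : w / c ∈ Icc (0 : ℝ) 1 :=
    ⟨div_nonneg hw.1 hc.le, div_le_one_of_le₀ hw.2 hc.le⟩
  rw [hγ.2.2 _ (hmem hu) _ (hmem hv), ← sub_div, abs_div, abs_of_pos hc]
  ring

/-- The triangle inequality along `x, γ u, γ v, y` forces every Lipschitz bound to be sharp. -/
lemma isMinGeodesic_of_dist_le (h0 : γ 0 = x) (h1 : γ 1 = y)
    (hle : ∀ u ∈ Icc (0 : ℝ) 1, ∀ v ∈ Icc (0 : ℝ) 1, dist (γ u) (γ v) ≤ |u - v| * dist x y) :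
    IsMinGeodesic γ x y := by
  have hzero := left_mem_Icc.2 (zero_le_one' ℝ)
  have hone := right_mem_Icc.2 (zero_le_one' ℝ)
  have hge {u v : ℝ} (hu : u ∈ Icc (0 : ℝ) 1) (hv : v ∈ Icc (0 : ℝ) 1) (huv : u ≤ v) :
      (v - u) * dist x y ≤ dist (γ u) (γ v) := by
    have hxu := hle 0 hzero u hu
    have hvy := hle v hv 1 hone
    rw [h0, zero_sub, abs_neg, abs_of_nonneg hu.1] at hxu
    rw [h1, abs_of_nonpos (sub_nonpos.2 hv.2)] at hvy
    nlinarith [dist_triangle4 x (γ u) (γ v) y]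
  refine ⟨h0, h1, fun u hu v hv => le_antisymm (hle u hu v hv) ?_⟩
  rcases le_total u v with huv | hvu
  · rw [abs_of_nonpos (sub_nonpos.2 huv), neg_sub]
    exact hge hu hv huv
  · rw [abs_of_nonneg (sub_nonneg.2 hvu), dist_comm (γ u)]
    exact hge hv hu hvu

lemma dist_ite_le_of_dist_le {f g : ℝ → X} {s K : ℝ} (hfg : f s = g s)
    (hf : ∀ u ∈ Icc 0 s, ∀ v ∈ Icc 0 s, dist (f u) (f v) ≤ |u - v| * K)
    (hg : ∀ u ∈ Icc s 1, ∀ v ∈ Icc s 1, dist (g u) (g v) ≤ |u - v| * K)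
    {u v : ℝ} (hu : u ∈ Icc (0 : ℝ) 1) (hv : v ∈ Icc (0 : ℝ) 1) :
    dist (if u ≤ s then f u else g u) (if v ≤ s then f v else g v) ≤ |u - v| * K := by
  wlog huv : u ≤ v generalizing u v
  · rw [dist_comm, abs_sub_comm]
    exact this hv hu (le_of_not_ge huv)
  by_cases hvs : v ≤ s
  · rw [if_pos (huv.trans hvs), if_pos hvs]
    exact hf u ⟨hu.1, huv.trans hvs⟩ v ⟨hv.1, hvs⟩
  by_cases hus : u ≤ s
  · rw [if_pos hus, if_neg hvs]
    have hs : 0 ≤ s := hu.1.trans hus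
    have h₁ := hf u ⟨hu.1, hus⟩ s ⟨hs, le_rfl⟩
    have h₂ := hg s ⟨le_rfl, (le_of_not_ge hvs).trans hv.2⟩ v ⟨(le_of_not_ge hvs), hv.2⟩
    rw [abs_of_nonpos (sub_nonpos.2 hus)] at h₁
    rw [abs_of_nonpos (sub_nonpos.2 (le_of_not_ge hvs))] at h₂
    rw [abs_of_nonpos (sub_nonpos.2 huv)]
    calc dist (f u) (g v) ≤ dist (f u) (f s) + dist (g s) (g v) := hfg ▸ dist_triangle _ _ _
      _ ≤ -(u - v) * K := by linarith
  · rw [if_neg hus, if_neg hvs]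
    exact hg u ⟨le_of_not_ge hus, hu.2⟩ v ⟨le_of_not_ge hvs, hv.2⟩

lemma IsGeodesicSpace.onMinGeodesic_left (hgeo : IsGeodesicSpace X) (x y : X) :
    OnMinGeodesic x x y :=
  let ⟨γ, hγ⟩ := hgeo x y
  ⟨γ, 0, left_mem_Icc.2 zero_le_one, hγ, hγ.1⟩

lemma IsGeodesicSpace.onMinGeodesic_right (hgeo : IsGeodesicSpace X) (x y : X) :
    OnMinGeodesic y x y :=
  let ⟨γ, hγ⟩ := hgeo x y
  ⟨γ, 1, right_mem_Icc.2 zero_le_one, hγ, hγ.2.1⟩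

lemma IsGeodesicSpace.exists_onMinGeodesic_dist_eq (hgeo : IsGeodesicSpace X) (x y : X)
    {r : ℝ} (hr0 : 0 ≤ r) (hr : r ≤ dist x y) :
    ∃ z, OnMinGeodesic z x y ∧ dist x z = r ∧ dist z y = dist x y - r := by
  obtain ⟨γ, hγ⟩ := hgeo x y
  have ht : r / dist x y ∈ Icc (0 : ℝ) 1 :=
    ⟨div_nonneg hr0 dist_nonneg, div_le_one_of_le₀ hr dist_nonneg⟩
  have hr' : r / dist x y * dist x y = r := div_mul_cancel_of_imp fun h => by linarith
  refine ⟨γ (r / dist x y), ⟨γ, _, ht, hγ, rfl⟩, ?_, ?_⟩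
  · rw [hγ.dist_left ht, hr']
  · rw [hγ.dist_right ht, sub_mul, one_mul, hr']

end Geodesic

section GeodesicSpace

variable {X : Type*} [MetricSpace X] {x y a : X}

/-- Concatenate geodesics `x → a` and `a → y`, run on `[0, s]` and `[s, 1]` with
`s = d(x, a) / d(x, y)`. -/
lemma IsGeodesicSpace.onMinGeodesic_of_dist_add_eq (hgeo : IsGeodesicSpace X)
    (h : dist x a + dist a y = dist x y) : OnMinGeodesic a x y := by
  rcases eq_or_ne a x with rfl | hax
  · exact hgeo.onMinGeodesic_left a y
  rcases eq_or_ne a y with rfl | hay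
  · exact hgeo.onMinGeodesic_right x a
  have hxa : 0 < dist x a := dist_pos.2 hax.symm
  have hay : 0 < dist a y := dist_pos.2 hay
  set D := dist x y
  set s := dist x a / D
  have hD : 0 < D := by linarith
  have hs : 0 < s := div_pos hxa hD
  have hs1 : 0 < 1 - s := by
    rw [sub_pos, div_lt_one hD]
    linarith
  have hDs : dist x a / s = D := div_div_cancel₀ hxa.ne'
  have hDs1 : dist a y / (1 - s) = D := by
    rw [div_eq_iff hs1.ne', mul_sub, mul_one, mul_div_cancel₀ _ hD.ne']
    linarith
  obtain ⟨γ₁, hγ₁⟩ := hgeo x a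
  obtain ⟨γ₂, hγ₂⟩ := hgeo a y
  refine ⟨fun u => if u ≤ s then γ₁ (u / s) else γ₂ ((u - s) / (1 - s)), s, ⟨hs.le, by linarith⟩,
    isMinGeodesic_of_dist_le ?_ ?_ fun u hu v hv => dist_ite_le_of_dist_le
      (f := fun u => γ₁ (u / s)) (g := fun u => γ₂ ((u - s) / (1 - s))) ?_ ?_ ?_ hu hv, ?_⟩
  · simp only [if_pos hs.le, zero_div, hγ₁.1]
  · simp only [if_neg (by linarith : ¬(1 : ℝ) ≤ s), div_self hs1.ne', hγ₂.2.1]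
  · rw [div_self hs.ne', hγ₁.2.1, sub_self, zero_div, hγ₂.1]
  · intro u hu v hv
    rw [hγ₁.dist_div hs hu hv, hDs]
  · intro u hu v hv
    rw [hγ₂.dist_div hs1 ⟨sub_nonneg.2 hu.1, by linarith [hu.2]⟩
      ⟨sub_nonneg.2 hv.1, by linarith [hv.2]⟩, sub_sub_sub_cancel_right, hDs1]
  · simp only [le_rfl, if_true, div_self hs.ne', hγ₁.2.1]

lemma IsGeodesicSpace.exists_onMinGeodesic_closer (hgeo : IsGeodesicSpace X)
    (ha : ¬OnMinGeodesic a x y) :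
    ∃ z, OnMinGeodesic z x y ∧ dist z x ≤ dist a x ∧ dist z y < dist a y := by
  have htri : dist x y < dist x a + dist a y :=
    (dist_triangle x a y).lt_of_ne fun h => ha (hgeo.onMinGeodesic_of_dist_add_eq h.symm)
  obtain ⟨z, hz, hxz, hzy⟩ := hgeo.exists_onMinGeodesic_dist_eq x y
    (le_min dist_nonneg dist_nonneg) (min_le_right (dist x a) (dist x y))
  refine ⟨z, hz, ?_, ?_⟩
  · rw [dist_comm, hxz, dist_comm a]
    exact min_le_left _ _
  · rw [hzy]
    rcases min_cases (dist x a) (dist x y) with ⟨hmin, -⟩ | ⟨hmin, -⟩ <;> rw [hmin]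
    · linarith
    · linarith [dist_triangle x y a, dist_comm y a]

end GeodesicSpace

section Coupling

variable {X : Type*} [MeasurableSpace X]

lemma prod_mem_couplings (μ ν : Measure X) [IsProbabilityMeasure μ] [IsProbabilityMeasure ν] :
    μ.prod ν ∈ Couplings μ ν :=
  ⟨Measure.fst_prod, Measure.snd_prod⟩

/-- A coupling with a Dirac mass is concentrated on `{a} × X`. -/
lemma integral_of_mem_couplings_dirac_left [MeasurableSingletonClass X] {a : X}
    {ν : Measure X} {π : Measure (X × X)} (hπ : π ∈ Couplings (Measure.dirac a) ν)
    {f : X → X → ℝ} (hf : AEStronglyMeasurable (f a) ν) :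
    ∫ z, f z.1 z.2 ∂π = ∫ w, f a w ∂ν := by
  have hfst : ∀ᵐ z ∂π, z.1 = a :=
    ae_of_ae_map measurable_fst.aemeasurable (p := (· = a)) (by rw [hπ.1, ae_dirac_eq]; rfl)
  rw [integral_congr_ae (hfst.mono fun z hz => by rw [hz]), ← hπ.2,
    integral_map measurable_snd.aemeasurable (hπ.2 ▸ hf)]

lemma integral_add_smul_dirac [MeasurableSingletonClass X] (g : X → ℝ) (x y : X) {p q : ℝ}
    (hp : 0 ≤ p) (hq : 0 ≤ q) :
    ∫ w, g w ∂(ENNReal.ofReal p • Measure.dirac x + ENNReal.ofReal q • Measure.dirac y) =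
      p * g x + q * g y := by
  have hi (b : X) : Integrable g (Measure.dirac b) :=
    (integrable_const (g b)).congr (ae_eq_dirac g).symm
  rw [integral_add_measure ((hi x).smul_measure ofReal_ne_top)
    ((hi y).smul_measure ofReal_ne_top), integral_smul_measure, integral_smul_measure,
    integral_dirac, integral_dirac, toReal_ofReal hp, toReal_ofReal hq, smul_eq_mul, smul_eq_mul]

lemma isProbabilityMeasure_smul_dirac_add (x y : X) {l : ℝ} (hl0 : 0 ≤ l) (hl1 : l ≤ 1) :
    IsProbabilityMeasure
      (ENNReal.ofReal l • Measure.dirac x + ENNReal.ofReal (1 - l) • Measure.dirac y) := by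
  constructor
  simp only [Measure.add_apply, Measure.smul_apply, smul_eq_mul, measure_univ, mul_one]
  rw [← ENNReal.ofReal_add hl0 (sub_nonneg.2 hl1), add_sub_cancel, ENNReal.ofReal_one]

end Coupling

section WOrlicz

variable {X : Type*} [MetricSpace X] [MeasurableSpace X] [BorelSpace X] {φ : ℝ → ℝ}

lemma WOrlicz_dirac_left (hφ : ContinuousOn φ (Ici 0)) (a : X) (ν : Measure X)
    [IsProbabilityMeasure ν] :
    WOrlicz φ (Measure.dirac a) ν = luxemburgGauge fun t => ∫ w, φ (dist a w / t) ∂ν := by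
  refine congrArg sInf (Set.ext fun t => and_congr_right fun ht => ?_)
  have hmeas : AEStronglyMeasurable (fun w => φ (dist a w / t)) ν :=
    (hφ.comp_continuous ((continuous_const.dist continuous_id).div_const t)
      fun _ => div_nonneg dist_nonneg ht.le).aestronglyMeasurable
  have himage : (fun π : Measure (X × X) => ∫ z, φ (dist z.1 z.2 / t) ∂π) ''
      Couplings (Measure.dirac a) ν = {∫ w, φ (dist a w / t) ∂ν} :=
    (Set.Nonempty.image_const ⟨_, prod_mem_couplings (Measure.dirac a) ν⟩ _ ▸
      Set.image_congr fun π hπ =>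
        integral_of_mem_couplings_dirac_left (f := fun u w => φ (dist u w / t)) hπ hmeas)
  rw [himage, csInf_singleton]

lemma WOrlicz_dirac_smul_dirac_add (hφ : ContinuousOn φ (Ici 0)) (a x y : X) {l : ℝ}
    (hl0 : 0 ≤ l) (hl1 : l ≤ 1) :
    WOrlicz φ (Measure.dirac a)
        (ENNReal.ofReal l • Measure.dirac x + ENNReal.ofReal (1 - l) • Measure.dirac y) =
      luxemburgGauge fun t => l * φ (dist a x / t) + (1 - l) * φ (dist a y / t) := by
  have := isProbabilityMeasure_smul_dirac_add x y hl0 hl1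
  simp only [WOrlicz_dirac_left hφ, integral_add_smul_dirac _ x y hl0 (sub_nonneg.2 hl1)]

end WOrlicz

theorem WOrlicz_minimizers_lie_on_geodesics_general {X : Type*} [MetricSpace X] [MeasurableSpace X]
    [BorelSpace X] (hgeo : IsGeodesicSpace X) (φ : ℝ → ℝ) (hφ : IsOrliczCost φ)
    (x y : X) (l : ℝ) (hl0 : 0 < l) (hl1 : l < 1)
    (μ : Measure X)
    (hμ : μ = ENNReal.ofReal l • Measure.dirac x + ENNReal.ofReal (1 - l) • Measure.dirac y) :
    (∀ a : X, (∀ b : X, WOrlicz φ (Measure.dirac a) μ ≤ WOrlicz φ (Measure.dirac b) μ) →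
        OnMinGeodesic a x y) ∧
    (∀ a : X, ¬ OnMinGeodesic a x y → ∃ a' : X, OnMinGeodesic a' x y ∧
        WOrlicz φ (Measure.dirac a') μ < WOrlicz φ (Measure.dirac a) μ) := by
  have hcloser (a : X) (ha : ¬OnMinGeodesic a x y) : ∃ a' : X, OnMinGeodesic a' x y ∧
      WOrlicz φ (Measure.dirac a') μ < WOrlicz φ (Measure.dirac a) μ := by
    obtain ⟨a', ha', hx, hy⟩ := hgeo.exists_onMinGeodesic_closer ha
    refine ⟨a', ha', ?_⟩
    rw [hμ, WOrlicz_dirac_smul_dirac_add hφ.continuousOn _ _ _ hl0.le hl1.le,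
      WOrlicz_dirac_smul_dirac_add hφ.continuousOn _ _ _ hl0.le hl1.le]
    exact hφ.luxemburgGauge_two_point_lt hl0.le hl1 dist_nonneg hx dist_nonneg hy
  refine ⟨fun a hmin => ?_, hcloser⟩
  by_contra ha
  obtain ⟨a', -, hlt⟩ := hcloser a ha
  exact (hmin a').not_gt hlt

/-- Let `X` be a geodesic metric space isometrically embedded via Dirac
deltas into the Orlicz–Wasserstein space `W_φ(X)`, `x ≠ y`, `0 < λ < 1` and
`μ = λ δ_x + (1-λ) δ_y`.  Then any point minimizing `z ↦ W_φ(δ_z, μ)` lies on a minimizing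
geodesic from `x` to `y`; more precisely, for every `a` not on any minimizing geodesic from
`x` to `y` there is `a'` on a minimizing geodesic from `x` to `y` with
`W_φ(δ_{a'}, μ) < W_φ(δ_a, μ)`. -/
theorem WOrlicz_minimizers_lie_on_geodesics {X : Type*} [MetricSpace X] [MeasurableSpace X]
    [BorelSpace X] (hgeo : IsGeodesicSpace X) (φ : ℝ → ℝ) (hφ : IsOrliczCost φ)
    (x y : X) (hxy : x ≠ y) (l : ℝ) (hl0 : 0 < l) (hl1 : l < 1)
    (μ : Measure X)
    (hμ : μ = ENNReal.ofReal l • Measure.dirac x + ENNReal.ofReal (1 - l) • Measure.dirac y) :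
    (∀ a : X, (∀ b : X, WOrlicz φ (Measure.dirac a) μ ≤ WOrlicz φ (Measure.dirac b) μ) →
        OnMinGeodesic a x y) ∧
    (∀ a : X, ¬ OnMinGeodesic a x y → ∃ a' : X, OnMinGeodesic a' x y ∧
        WOrlicz φ (Measure.dirac a') μ < WOrlicz φ (Measure.dirac a) μ) :=
  WOrlicz_minimizers_lie_on_geodesics_general hgeo φ hφ x y l hl0 hl1 μ hμ
end
end
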